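/- Let G be a finite graph with no twins and no universal vertices. Then G is a circular-arc graph if and only if G admits a normalized circular-arc model. -/

import Mathlib

/-!
Start from any circular-arc model and repair it by enlarging arcs; enlarging never undoes a
containment of arcs or a covering of the circle already achieved. An enlarged arc still gives a
model as long as every endpoint it swallows belongs to a neighbour. If `v cs u` but the arcs of
`v` and `u` only overlap, the arc of `v` is stretched over their union. If `v cc u` but the two
arcs leave a gap, both are stretched into the gap until they meet; the `cc` condition is exactly
what makes the endpoints in the gap that each of them must avoid lie on the correct sides.
Once all `cs` pairs are realised by containment and all `cc` pairs by covering, the absence of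
twins makes every relation match its arc configuration.
-/

namespace CAIso

/-- The circle on which all models live. -/
abbrev Circle1 : Type := UnitAddCircle

variable {V : Type*}

/-- Closed neighborhood of a vertex. -/
def cnbr (G : SimpleGraph V) (v : V) : Set V := insert v {u | G.Adj v u}

/-- `G` has no twins: distinct vertices have distinct closed neighborhoods. -/
def NoTwins (G : SimpleGraph V) : Prop := ∀ u v : V, u ≠ v → cnbr G u ≠ cnbr G v

/-- `G` has no universal vertices. -/
def NoUniversal (G : SimpleGraph V) : Prop := ∀ v : V, cnbr G v ≠ Set.univ

/-- `v di u` : non-adjacent (distinct) vertices. -/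
def Di (G : SimpleGraph V) (v u : V) : Prop := v ≠ u ∧ ¬ G.Adj v u
/-- `v cs u` : `N[u] ⊊ N[v]`. -/
def Cs (G : SimpleGraph V) (v u : V) : Prop := v ≠ u ∧ cnbr G u ⊂ cnbr G v
/-- `v cd u` : `N[v] ⊊ N[u]`. -/
def Cd (G : SimpleGraph V) (v u : V) : Prop := v ≠ u ∧ cnbr G v ⊂ cnbr G u
/-- `v cc u`. -/
def Cc (G : SimpleGraph V) (v u : V) : Prop :=
  v ≠ u ∧ G.Adj v u ∧ cnbr G v ∪ cnbr G u = Set.univ ∧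
  (∀ w ∈ cnbr G v \ cnbr G u, cnbr G w ⊂ cnbr G v) ∧
  (∀ w ∈ cnbr G u \ cnbr G v, cnbr G w ⊂ cnbr G u)
/-- `v ov u` : the overlap relation `∼` of the overlap graph `G_ov`. -/
def Ov (G : SimpleGraph V) (v u : V) : Prop :=
  v ≠ u ∧ ¬ Di G v u ∧ ¬ Cs G v u ∧ ¬ Cd G v u ∧ ¬ Cc G v u
/-- `v ∥ u` : distinct and not `∼`-adjacent (complement of the overlap graph). -/
def ParR (G : SimpleGraph V) (v u : V) : Prop := v ≠ u ∧ ¬ Ov G v u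

/-- `left(v)`. -/
def leftSet (G : SimpleGraph V) (v : V) : Set V := {u | Cs G v u ∨ Cc G v u}
/-- `right(v)`. -/
def rightSet (G : SimpleGraph V) (v : V) : Set V := {u | Di G v u ∨ Cd G v u}

/-- The labeled endpoint map of a model: `(v, false)` is the first endpoint
(tail of a chord / initial endpoint of an arc, the letter `v⁰`), `(v, true)` the second
(the letter `v¹`). -/
def lep (φ : V → Circle1 × Circle1) (p : V × Bool) : Circle1 :=
  if p.2 then (φ p.1).2 else (φ p.1).1

/-- All endpoints of the objects assigned to vertices of `M` are pairwise distinct. -/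
def DistinctEndpointsOn (M : Set V) (φ : V → Circle1 × Circle1) : Prop :=
  Set.InjOn (lep φ) {p : V × Bool | p.1 ∈ M}

/-- The closed arc running in the positive direction from `c.1` to `c.2`. -/
def arcPts (c : Circle1 × Circle1) : Set Circle1 := {x | btw c.1 x c.2}
/-- The closed arc from `a` to `b` (positive direction). -/
def arcSet (a b : Circle1) : Set Circle1 := {x | btw a x b}
/-- The open arc from `a` to `b` (positive direction). -/
def oarcSet (a b : Circle1) : Set Circle1 := {x | sbtw a x b}

/-- A circular-arc model of `G`. -/
def IsCAModel (G : SimpleGraph V) (ψ : V → Circle1 × Circle1) : Prop :=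
  DistinctEndpointsOn Set.univ ψ ∧
  ∀ u v : V, u ≠ v → (G.Adj u v ↔ (arcPts (ψ u) ∩ arcPts (ψ v)).Nonempty)

/-- `G` is a circular-arc graph. -/
def IsCircularArc (G : SimpleGraph V) : Prop := ∃ ψ, IsCAModel G ψ

/-- Two arcs overlap: they intersect, neither contains the other,
and their union is not the whole circle. -/
def ArcsOverlap (c d : Circle1 × Circle1) : Prop :=
  (arcPts c ∩ arcPts d).Nonempty ∧ ¬ arcPts c ⊆ arcPts d ∧ ¬ arcPts d ⊆ arcPts c ∧
  arcPts c ∪ arcPts d ≠ Set.univ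

/-- A normalized circular-arc model of `G`. -/
def IsNormalizedModel (G : SimpleGraph V) (ψ : V → Circle1 × Circle1) : Prop :=
  IsCAModel G ψ ∧ ∀ u v : V, u ≠ v →
    ((Di G v u ↔ arcPts (ψ v) ∩ arcPts (ψ u) = ∅) ∧
     (Cs G v u ↔ arcPts (ψ u) ⊂ arcPts (ψ v)) ∧
     (Cd G v u ↔ arcPts (ψ v) ⊂ arcPts (ψ u)) ∧
     (Cc G v u ↔ arcPts (ψ v) ∪ arcPts (ψ u) = Set.univ) ∧
     (Ov G v u ↔ ArcsOverlap (ψ v) (ψ u)))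

/-- Two chords cross: each open arc determined by `c` contains exactly one endpoint of `d`. -/
def Crosses (c d : Circle1 × Circle1) : Prop :=
  (sbtw c.1 d.1 c.2 ∧ sbtw c.2 d.2 c.1) ∨ (sbtw c.1 d.2 c.2 ∧ sbtw c.2 d.1 c.1)

/-- A chord model of the relation `r` on the vertex set `M`. -/
def IsChordModelOn (r : V → V → Prop) (M : Set V) (φ : V → Circle1 × Circle1) : Prop :=
  DistinctEndpointsOn M φ ∧ ∀ u ∈ M, ∀ v ∈ M, u ≠ v → (r u v ↔ Crosses (φ u) (φ v))

/-- Chord `d` lies on the left side of the oriented chord `c = (tail, head)`: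
both endpoints of `d` lie in the open arc from the tail of `c` to the head of `c`. -/
def OnLeft (c d : Circle1 × Circle1) : Prop := sbtw c.1 d.1 c.2 ∧ sbtw c.1 d.2 c.2
/-- Chord `d` lies on the right side of the oriented chord `c`. -/
def OnRight (c d : Circle1 × Circle1) : Prop := sbtw c.2 d.1 c.1 ∧ sbtw c.2 d.2 c.1

/-- A conformal (oriented chord) model of `(M, ∼)`, where `∼` is the overlap relation of `G`. -/
def IsConformalOn (G : SimpleGraph V) (M : Set V) (φ : V → Circle1 × Circle1) : Prop :=
  IsChordModelOn (Ov G) M φ ∧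
  ∀ v ∈ M, ∀ u ∈ M, u ≠ v →
    ((u ∈ leftSet G v ↔ OnLeft (φ v) (φ u)) ∧ (u ∈ rightSet G v ↔ OnRight (φ v) (φ u)))

/-- `x ∼ M` : `x` is `∼`-adjacent to every vertex of `M`. -/
def SimAll (G : SimpleGraph V) (x : V) (M : Set V) : Prop := ∀ m ∈ M, Ov G x m
/-- `x ∥ M`. -/
def ParAll (G : SimpleGraph V) (x : V) (M : Set V) : Prop := ∀ m ∈ M, ParR G x m

/-- A module of the overlap graph `G_ov`. -/
def IsModule (G : SimpleGraph V) (M : Set V) : Prop :=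
  M.Nonempty ∧ ∀ x ∉ M, SimAll G x M ∨ ParAll G x M

/-- A strong module of `G_ov`. -/
def IsStrongModule (G : SimpleGraph V) (M : Set V) : Prop :=
  IsModule G M ∧ ∀ N, IsModule G N → N ⊆ M ∨ M ⊆ N ∨ Disjoint M N

/-- A proper module: some outside vertex is `∼`-adjacent to all of `M`. -/
def ProperModule (G : SimpleGraph V) (M : Set V) : Prop := ∃ x ∉ M, SimAll G x M

/-- `N` is a child of `M` in the modular decomposition:
a maximal strong module properly contained in `M`. -/
def IsChildOf (G : SimpleGraph V) (M N : Set V) : Prop :=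
  IsStrongModule G N ∧ N ⊂ M ∧ ∀ N', IsStrongModule G N' → N' ⊂ M → N ⊆ N' → N' = N

def NonSingleton (M : Set V) : Prop := ∃ x ∈ M, ∃ y ∈ M, x ≠ y

def ChildrenPairwiseSim (G : SimpleGraph V) (M : Set V) : Prop :=
  ∀ N₁ N₂, IsChildOf G M N₁ → IsChildOf G M N₂ → N₁ ≠ N₂ → ∀ x ∈ N₁, ∀ y ∈ N₂, Ov G x y
def ChildrenPairwisePar (G : SimpleGraph V) (M : Set V) : Prop :=
  ∀ N₁ N₂, IsChildOf G M N₁ → IsChildOf G M N₂ → N₁ ≠ N₂ → ∀ x ∈ N₁, ∀ y ∈ N₂, ParR G x y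

/-- A serial strong module of the modular decomposition of `G_ov`. -/
def SerialM (G : SimpleGraph V) (M : Set V) : Prop :=
  IsStrongModule G M ∧ NonSingleton M ∧ ChildrenPairwiseSim G M
/-- A parallel strong module. -/
def ParallelM (G : SimpleGraph V) (M : Set V) : Prop :=
  IsStrongModule G M ∧ NonSingleton M ∧ ChildrenPairwisePar G M
/-- A prime strong module (neither serial nor parallel). -/
def PrimeM (G : SimpleGraph V) (M : Set V) : Prop :=
  IsStrongModule G M ∧ NonSingleton M ∧ ¬ ChildrenPairwiseSim G M ∧ ¬ ChildrenPairwisePar G M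

/-- The graph induced by the (symmetrized) relation `r` on the set `M` is connected. -/
def ConnOn (r : V → V → Prop) (M : Set V) : Prop :=
  M.Nonempty ∧ ∀ ⦃x⦄, x ∈ M → ∀ ⦃y⦄, y ∈ M →
    Relation.ReflTransGen (fun a b => a ∈ M ∧ b ∈ M ∧ (r a b ∨ r b a)) x y

/-- `N[M]`, the set of outside vertices `∼`-adjacent to all of `M`. -/
def nbrMod (G : SimpleGraph V) (M : Set V) : Set V := {x | x ∉ M ∧ SimAll G x M}

/-- `C[M]`, the vertex set of the connected component of `G_ov` containing `M`. -/
def compOf (G : SimpleGraph V) (M : Set V) : Set V :=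
  {x | ∃ m ∈ M, Relation.ReflTransGen (fun a b => Ov G a b ∨ Ov G b a) x m}

/-- The set of endpoints of the chords/arcs of the vertices in `A`. -/
def eptSet (φ : V → Circle1 × Circle1) (A : Set V) : Set Circle1 :=
  {x | ∃ p : V × Bool, p.1 ∈ A ∧ lep φ p = x}

/-- The set of circle points realizing a set of labeled letters. -/
def lepIm (φ : V → Circle1 × Circle1) (P : Set (V × Bool)) : Set Circle1 :=
  {x | ∃ p ∈ P, lep φ p = x}

/-- `X` is contiguous in `Y`: `X = Y ∩ A` for a circular arc `A`. -/
def ContiguousIn (X Y : Set Circle1) : Prop := ∃ a b : Circle1, a ≠ b ∧ X = Y ∩ arcSet a b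

/-- `X` forms two contiguous blocks in `Y`. -/
def TwoBlocks (Y X : Set Circle1) : Prop :=
  ∃ X₁ X₂ : Set Circle1, X₁.Nonempty ∧ X₂.Nonempty ∧ Disjoint X₁ X₂ ∧ X₁ ∪ X₂ = X ∧
    ContiguousIn X₁ Y ∧ ContiguousIn X₂ Y

/-- The endpoints of `M` form two contiguous blocks, given by the arcs `(a,b)` and `(a',b')`,
within the endpoints of `Y`, each block containing exactly one endpoint of each chord of `M`. -/
def BlockDecomp (φ : V → Circle1 × Circle1) (Y M : Set V) (a b a' b' : Circle1) : Prop :=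
  a ≠ b ∧ a' ≠ b' ∧
  a ∉ eptSet φ Y ∧ b ∉ eptSet φ Y ∧ a' ∉ eptSet φ Y ∧ b' ∉ eptSet φ Y ∧
  Disjoint (eptSet φ Y ∩ arcSet a b) (eptSet φ Y ∩ arcSet a' b') ∧
  (eptSet φ Y ∩ arcSet a b) ∪ (eptSet φ Y ∩ arcSet a' b') = eptSet φ M ∧
  ∀ v ∈ M, (lep φ (v, false) ∈ arcSet a b ∧ lep φ (v, true) ∈ arcSet a' b') ∨
           (lep φ (v, false) ∈ arcSet a' b' ∧ lep φ (v, true) ∈ arcSet a b)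

/-- Reading order along the arc `(a,b)`: some endpoint of `u` inside the arc
precedes some endpoint of `w` inside the arc. -/
def rdOrd (φ : V → Circle1 × Circle1) (a b : Circle1) (u w : V) : Prop :=
  ∃ p q : Bool, lep φ (u, p) ∈ arcSet a b ∧ lep φ (w, q) ∈ arcSet a b ∧
    lep φ (u, p) ≠ lep φ (w, q) ∧ btw a (lep φ (u, p)) (lep φ (w, q))

/-- The letter of `u` belonging to `P` precedes the letter of `w` belonging to `P`,
reading from the point `a` in the positive direction. -/
def precInSet (φ : V → Circle1 × Circle1) (P : Set (V × Bool)) (a : Circle1) (u w : V) : Prop :=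
  ∃ p q : Bool, (u, p) ∈ P ∧ (w, q) ∈ P ∧ lep φ (u, p) ≠ lep φ (w, q) ∧
    btw a (lep φ (u, p)) (lep φ (w, q))

/-- `r` is a strict linear order on the set `M`. -/
def IsLinOrderOn (M : Set V) (r : V → V → Prop) : Prop :=
  (∀ x ∈ M, ¬ r x x) ∧
  (∀ x ∈ M, ∀ y ∈ M, ∀ z ∈ M, r x y → r y z → r x z) ∧
  (∀ x ∈ M, ∀ y ∈ M, x ≠ y → (r x y ↔ ¬ r y x))

/-- `(r₁, r₂)` is a permutation model of the graph `(M, adj)`. -/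
def IsPermModelOn (adj : V → V → Prop) (M : Set V) (r₁ r₂ : V → V → Prop) : Prop :=
  IsLinOrderOn M r₁ ∧ IsLinOrderOn M r₂ ∧
  ∀ x ∈ M, ∀ y ∈ M, x ≠ y → (adj x y ↔ (r₁ x y ↔ r₂ x y))

/-- `r` is an orientation of the edges `E` restricted to `M`. -/
def IsOrientationOn (E : V → V → Prop) (M : Set V) (r : V → V → Prop) : Prop :=
  (∀ x y, r x y → x ∈ M ∧ y ∈ M ∧ E x y) ∧
  (∀ x ∈ M, ∀ y ∈ M, E x y → (r x y ↔ ¬ r y x))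

/-- `r` is a transitive orientation of the edges `E` restricted to `M`. -/
def IsTransOrientOn (E : V → V → Prop) (M : Set V) (r : V → V → Prop) : Prop :=
  IsOrientationOn E M r ∧ ∀ x y z, r x y → r y z → r x z

/-- The cyclic betweenness of three labeled endpoints of a model. -/
def sb3 (φ : V → Circle1 × Circle1) (p q r : V × Bool) : Prop :=
  sbtw (lep φ p) (lep φ q) (lep φ r)

/-- Equivalence of oriented chord models restricted to `M` (equal circular words
over the labeled letters). -/
def OEquivOn (M : Set V) (φ ψ : V → Circle1 × Circle1) : Prop :=
  ∀ p q r : V × Bool, p.1 ∈ M → q.1 ∈ M → r.1 ∈ M → (sb3 φ p q r ↔ sb3 ψ p q r)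

def flipB : V × Bool → V × Bool := fun p => (p.1, !p.2)

/-- `ψ` is (equivalent to) the reflection of `φ` on `M`: the circular word of `ψ`
is the reverse of that of `φ` with `v⁰` and `v¹` exchanged. -/
def OReflOn (M : Set V) (φ ψ : V → Circle1 × Circle1) : Prop :=
  ∀ p q r : V × Bool, p.1 ∈ M → q.1 ∈ M → r.1 ∈ M →
    (sb3 φ p q r ↔ sb3 ψ (flipB r) (flipB q) (flipB p))

def swapBy (h : V → Bool) : V × Bool → V × Bool := fun p => (p.1, xor p.2 (h p.1))

/-- Equivalence of (non-oriented) chord models: equal circular word representations. -/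
def UEquiv (φ ψ : V → Circle1 × Circle1) : Prop :=
  ∃ h : V → Bool, ∀ p q r : V × Bool,
    sb3 φ p q r ↔ sb3 ψ (swapBy h p) (swapBy h q) (swapBy h r)

/-- `ψ` is equivalent to the reflection of the (non-oriented) chord model `φ`. -/
def UReflEquiv (φ ψ : V → Circle1 × Circle1) : Prop :=
  ∃ h : V → Bool, ∀ p q r : V × Bool,
    sb3 φ p q r ↔ sb3 ψ (swapBy h r) (swapBy h q) (swapBy h p)

/-- The sets `S 0, …, S (n-1)` appear in this circular order around the circle:
there are cut points, in cyclic order, such that `S i` lies in the `i`-th gap. -/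
def SetsInCyclicOrder (n : ℕ) (S : ℕ → Set Circle1) : Prop :=
  ∃ r : ℕ → ℝ,
    (∀ i j, i < j → j < n → r i < r j) ∧
    (∀ i, i < n → ∀ j, j < n → r i < r j + 1) ∧
    ∀ i, i < n → ∀ x ∈ S i, sbtw ((r i : ℝ) : Circle1) x ((r ((i + 1) % n) : ℝ) : Circle1)

/-- A split `(A, α(A), B, α(B))` of the graph `G`. -/
def IsSplit (G : SimpleGraph V) (A aA B aB : Set V) : Prop :=
  A.Nonempty ∧ B.Nonempty ∧
  Disjoint A aA ∧ Disjoint A B ∧ Disjoint A aB ∧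
  Disjoint aA B ∧ Disjoint aA aB ∧ Disjoint B aB ∧
  A ∪ aA ∪ B ∪ aB = Set.univ ∧
  (∀ a ∈ A, ∀ b ∈ B, G.Adj a b) ∧
  (∀ x ∈ aA, ∀ y ∈ B ∪ aB, ¬ G.Adj x y) ∧
  (∀ x ∈ aB, ∀ y ∈ A ∪ aA, ¬ G.Adj x y)

/-- A non-trivial split. -/
def NontrivialSplit (G : SimpleGraph V) (A aA B aB : Set V) : Prop :=
  IsSplit G A aA B aB ∧ 1 < (A ∪ aA).ncard ∧ 1 < (B ∪ aB).ncard

/-- The metaedge `(M⁰, M¹, <_M)` of the module `M` with representant `rep`: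
`M⁰, M¹` partition the labeled letters of `M` (one letter of each vertex on each side,
with `rep⁰ ∈ M⁰`), `<_M` is a transitive orientation of `(M, ∥)`, and in every conformal
model of `G_ov`, for every decomposition of the letters of `M` into two contiguous blocks
among the letters of `C[M]` whose first block contains `rep⁰`, the first block consists
exactly of the letters `M⁰`, the second of `M¹`, and the reading order of the first block
restricted to `∥`-pairs is exactly `<_M`. -/
def IsMetaedge (G : SimpleGraph V) (M : Set V) (rep : V)
    (M0 M1 : Set (V × Bool)) (lt : V → V → Prop) : Prop :=
  M0 ∪ M1 = {p : V × Bool | p.1 ∈ M} ∧ Disjoint M0 M1 ∧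
  (∀ v ∈ M, ((v, false) ∈ M0 ↔ (v, true) ∈ M1)) ∧
  (rep, false) ∈ M0 ∧
  IsTransOrientOn (ParR G) M lt ∧
  ∀ φ : V → Circle1 × Circle1, IsConformalOn G Set.univ φ →
    ∀ a b a' b' : Circle1, BlockDecomp φ (compOf G M) M a b a' b' →
      lep φ (rep, false) ∈ arcSet a b →
      ((∀ p : V × Bool, p.1 ∈ M →
          ((p ∈ M0 ↔ lep φ p ∈ arcSet a b) ∧ (p ∈ M1 ↔ lep φ p ∈ arcSet a' b'))) ∧
       ∀ x ∈ M, ∀ y ∈ M, ParR G x y → (lt x y ↔ precInSet φ M0 a x y))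

/-- In the model `φ`, the letters `W0` are placed in the open arc `(c0, d0)`, the letters
`W1` in the open arc `(c1, d1)`, and the two induced reading orders form an (admissible)
oriented permutation model of `(Wset, ∼)` whose first order agrees with `lt` on `∥`-pairs. -/
def AdmissiblePlacedAt (G : SimpleGraph V) (φ : V → Circle1 × Circle1)
    (Wset : Set V) (W0 W1 : Set (V × Bool)) (lt : V → V → Prop)
    (c0 d0 c1 d1 : Circle1) : Prop :=
  (∀ p ∈ W0, sbtw c0 (lep φ p) d0) ∧
  (∀ p ∈ W1, sbtw c1 (lep φ p) d1) ∧
  (∀ x ∈ Wset, ∀ y ∈ Wset, x ≠ y →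
    (Ov G x y ↔ (precInSet φ W0 c0 x y ↔ precInSet φ W1 c1 x y))) ∧
  (∀ x ∈ Wset, ∀ y ∈ Wset, ParR G x y → (lt x y ↔ precInSet φ W0 c0 x y))

/-- An improper prime strong module: `(M,∼)` and `(M,∥)` are connected
and no outside vertex is `∼`-adjacent to all of `M`. -/
def ImproperPrime (G : SimpleGraph V) (M : Set V) : Prop :=
  IsStrongModule G M ∧ ConnOn (Ov G) M ∧ ConnOn (ParR G) M ∧ ¬ ProperModule G M

/-- `U` is a transversal of `M`: it contains exactly one vertex of each child of `M`. -/
def IsTransversal (G : SimpleGraph V) (M U : Set V) : Prop :=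
  U ⊆ M ∧ (∀ N, IsChildOf G M N → ∃! u, u ∈ U ∩ N) ∧
  ∀ u ∈ U, ∃ N, IsChildOf G M N ∧ u ∈ N

/-- A probe `(y, x, X, α(X))` in the graph `(Uset, ∼)`. -/
def IsProbe (G : SimpleGraph V) (Uset : Set V) (y x : V) (X aX : Set V) : Prop :=
  x ≠ y ∧ X.Nonempty ∧ aX.Nonempty ∧
  Disjoint ({x, y} : Set V) X ∧ Disjoint ({x, y} : Set V) aX ∧ Disjoint X aX ∧
  ({x, y} ∪ X ∪ aX) ⊂ Uset ∧
  Ov G y x ∧ (∀ z ∈ X ∪ aX, ParR G y z) ∧ (∀ z ∈ X, Ov G x z) ∧ (∀ z ∈ aX, ParR G x z) ∧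
  ConnOn (Ov G) ({x, y} ∪ X ∪ aX) ∧
  ∀ z ∈ Uset \ ({x, y} ∪ X ∪ aX),
    (∀ w ∈ X ∪ aX, ParR G z w) ∨ ((∀ w ∈ X, Ov G z w) ∧ ∀ w ∈ aX, ParR G z w) ∨
    (∀ w ∈ X ∪ aX, Ov G z w)

/-- The `K`-relation on a child `Mi` of an improper prime module, relative to the
transversal `U`; its equivalence classes are the consistent submodules. -/
def KrelOn (G : SimpleGraph V) (U Mi : Set V) (v v' : V) : Prop :=
  v ∈ Mi ∧ v' ∈ Mi ∧
  (v = v' ∨ PrimeM G Mi ∨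
   (ParallelM G Mi ∧ ∀ u ∈ U \ Mi,
      (v ∈ leftSet G u ∧ v' ∈ leftSet G u) ∨ (v ∈ rightSet G u ∧ v' ∈ rightSet G u)) ∨
   (SerialM G Mi ∧
      ({leftSet G v ∩ (U \ Mi), rightSet G v ∩ (U \ Mi)} : Set (Set V)) =
       {leftSet G v' ∩ (U \ Mi), rightSet G v' ∩ (U \ Mi)}))

/-- `M` is the vertex set of a connected component of `G_ov`. -/
def IsCompOf (G : SimpleGraph V) (M : Set V) : Prop :=
  ∃ v, M = {u | Relation.ReflTransGen (fun a b => Ov G a b ∨ Ov G b a) v u}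

/-- `v` separates the modules `M₁` and `M₂`. -/
def Separates (G : SimpleGraph V) (v : V) (M₁ M₂ : Set V) : Prop :=
  v ∉ M₁ ∪ M₂ ∧
  ((M₁ ⊆ leftSet G v ∧ M₂ ⊆ rightSet G v) ∨ (M₂ ⊆ leftSet G v ∧ M₁ ⊆ rightSet G v))

def NonSep (G : SimpleGraph V) (M₁ M₂ : Set V) : Prop := ¬ ∃ v, Separates G v M₁ M₂

/-- A node: a maximal set of pairwise non-separated components of `G_ov`. -/
def IsNode (G : SimpleGraph V) (N : Set (Set V)) : Prop :=
  (∀ M ∈ N, IsCompOf G M) ∧ (∀ M₁ ∈ N, ∀ M₂ ∈ N, NonSep G M₁ M₂) ∧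
  (∀ M', IsCompOf G M' → (∀ M ∈ N, NonSep G M' M) → M' ∈ N)

/-- The vertex set of the bipartite graph `T_NM` : modules (components of `G_ov`) on the
left, nodes on the right. -/
def TVert (G : SimpleGraph V) : Type _ :=
  {M : Set V // IsCompOf G M} ⊕ {N : Set (Set V) // IsNode G N}

/-- The bipartite graph `T_NM`. -/
def TNM (G : SimpleGraph V) : SimpleGraph (TVert G) where
  Adj x y :=
    match x, y with
    | Sum.inl M, Sum.inr N => M.1 ∈ N.1
    | Sum.inr N, Sum.inl M => M.1 ∈ N.1
    | _, _ => False
  symm := ⟨by rintro (M | N) (M' | N') h <;> exact h⟩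
  loopless := ⟨by rintro (M | N) h <;> exact h⟩

/-- The set of vertices of `G` contained in the modules lying in the connected component
of `T_NM − x₀` containing `y`. -/
def VTavoid (G : SimpleGraph V) (x₀ y : TVert G) : Set V :=
  {u | ∃ M : {M : Set V // IsCompOf G M},
    Relation.ReflTransGen (fun a c => (TNM G).Adj a c ∧ a ≠ x₀ ∧ c ≠ x₀) y (Sum.inl M) ∧
    u ∈ M.1}

open Set

section Coordinates

noncomputable def coord (a : ℝ) (x : Circle1) : ℝ := AddCircle.equivIco 1 a x

/-- What `btw` on the circle becomes for coordinates taken in a common window (`btw_coe_iff_linBtw`). -/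
def LinBtw (u v w : ℝ) : Prop := u ≤ v ∧ v ≤ w ∨ v ≤ w ∧ w ≤ u ∨ w ≤ u ∧ u ≤ v

lemma coord_bounds (a : ℝ) (x : Circle1) : a ≤ coord a x ∧ coord a x < a + 1 :=
  (AddCircle.equivIco 1 a x).2

lemma coe_coord (a : ℝ) (x : Circle1) : ((coord a x : ℝ) : Circle1) = x :=
  AddCircle.coe_equivIco

lemma coord_coe {a y : ℝ} (hy : y ∈ Ico a (a + 1)) : coord a y = y :=
  AddCircle.equivIco_coe_of_mem (by simpa using hy)

lemma exists_coord_eq (x : Circle1) : ∃ a, coord a x = a :=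
  ⟨coord 0 x, by
    conv_lhs => arg 2; rw [← coe_coord 0 x]
    exact coord_coe ⟨le_rfl, lt_add_one _⟩⟩

lemma btw_coe_iff_linBtw {a u v w : ℝ} (hu : u ∈ Ico a (a + 1)) (hv : v ∈ Ico a (a + 1))
    (hw : w ∈ Ico a (a + 1)) : btw (u : Circle1) v w ↔ LinBtw u v w := by
  obtain ⟨hu₁, hu₂⟩ := hu; obtain ⟨hv₁, hv₂⟩ := hv; obtain ⟨hw₁, hw₂⟩ := hw
  have hv' : toIcoMod one_pos u v = if u ≤ v then v else v + 1 := by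
    split_ifs
    · exact (toIcoMod_eq_self _).2 ⟨by assumption, by linarith⟩
    · rw [← toIcoMod_add_right]
      exact (toIcoMod_eq_self _).2 ⟨by linarith, by linarith⟩
  have hw' : toIocMod one_pos u w = if u < w then w else w + 1 := by
    split_ifs
    · exact (toIocMod_eq_self _).2 ⟨by assumption, by linarith⟩
    · rw [← toIocMod_add_right]
      exact (toIocMod_eq_self _).2 ⟨by linarith, by linarith⟩
  change btw (QuotientAddGroup.mk u : ℝ ⧸ AddSubgroup.zmultiples (1 : ℝ)) v w ↔ _
  rw [QuotientAddGroup.btw_coe_iff, hv', hw', LinBtw]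
  split_ifs <;> grind

lemma mem_arcPts_iff (a : ℝ) {c : Circle1 × Circle1} {x : Circle1} :
    x ∈ arcPts c ↔ LinBtw (coord a c.1) (coord a x) (coord a c.2) := by
  conv_lhs => rw [arcPts, mem_ofPred_eq, ← coe_coord a c.1, ← coe_coord a x, ← coe_coord a c.2]
  exact btw_coe_iff_linBtw (coord_bounds a _) (coord_bounds a _) (coord_bounds a _)

end Coordinates

section RealLine

lemma exists_fresh_between {L U E : Set ℝ} (hL : L.Finite) (hU : U.Finite) (hE : E.Finite)
    (hL₀ : L.Nonempty) (hU₀ : U.Nonempty) (hLU : ∀ l ∈ L, ∀ u ∈ U, l < u) :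
    ∃ r ∉ E, (∀ l ∈ L, l < r) ∧ ∀ u ∈ U, r < u := by
  obtain ⟨l₀, hl₀, hl⟩ := exists_max_image L id hL hL₀
  obtain ⟨u₀, hu₀, hu⟩ := exists_min_image U id hU hU₀
  obtain ⟨r, ⟨hlr, hru⟩, hr⟩ := ((Ioo_infinite (hLU l₀ hl₀ u₀ hu₀)).sdiff hE).nonempty
  exact ⟨r, hr, fun l h => (hl l h).trans_lt hlr, fun u h => hru.trans_le (hu u h)⟩

lemma exists_margins {E : Set ℝ} (hE : E.Finite) {b c : ℝ} (hbc : b < c) :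
    ∃ r l, b < r ∧ r < l ∧ l < c ∧ ∀ e ∈ E, e ∉ Ioc b r ∧ e ∉ Ico l c := by
  obtain ⟨r, -, hbr, hr⟩ := exists_fresh_between (finite_singleton b)
    ((hE.inter_of_left _).insert c) hE (singleton_nonempty b) (insert_nonempty _ _)
    (by
      intro l hl u hu
      rw [mem_singleton_iff.1 hl]
      rcases hu with rfl | ⟨-, hu⟩
      exacts [hbc, hu])
  obtain ⟨l, -, hrl, hl⟩ := exists_fresh_between ((hE.inter_of_left _).insert r)
    (finite_singleton c) hE (insert_nonempty _ _) (singleton_nonempty c)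
    (by
      intro l hl u hu
      rw [mem_singleton_iff.1 hu]
      rcases hl with rfl | ⟨-, hl⟩
      exacts [hr c (mem_insert c _), hl])
  refine ⟨r, l, hbr _ rfl, hrl r (mem_insert r _), hl c rfl, fun e he => ⟨?_, ?_⟩⟩
  · rintro ⟨hbe, her⟩
    exact (hr e (mem_insert_of_mem _ ⟨he, hbe⟩)).not_ge her
  · rintro ⟨hle, hec⟩
    exact (hrl e (mem_insert_of_mem _ ⟨he, hec⟩)).not_ge hle

end RealLine

section ArcGeometry

variable {A B D W : Circle1 × Circle1}

lemma left_mem_arcPts (c : Circle1 × Circle1) : c.1 ∈ arcPts c := btw_refl_left c.1 c.2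

lemma right_mem_arcPts (c : Circle1 × Circle1) : c.2 ∈ arcPts c := btw_refl_right c.1 c.2

lemma subset_of_ends_not_mem {z : Circle1} (hzW : z ∈ arcPts W) (hzA : z ∈ arcPts A)
    (h₁ : W.1 ∉ arcPts A) (h₂ : W.2 ∉ arcPts A) : arcPts A ⊆ arcPts W := by
  obtain ⟨a, ha⟩ := exists_coord_eq A.1
  intro x hx
  simp only [mem_arcPts_iff a, ha, LinBtw] at *
  grind [coord_bounds]

lemma union_eq_univ_of_ends_mem (h₁ : B.1 ∈ arcPts A) (h₂ : B.2 ∈ arcPts A)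
    (h : ¬ arcPts B ⊆ arcPts A) : arcPts A ∪ arcPts B = univ := by
  obtain ⟨a, ha⟩ := exists_coord_eq A.1
  obtain ⟨y, hyB, hyA⟩ := not_subset.1 h
  refine eq_univ_of_forall fun x => ?_
  simp only [mem_union, mem_arcPts_iff a, ha, LinBtw] at *
  grind [coord_bounds]

lemma fst_mem_or_fst_mem (h : (arcPts A ∩ arcPts B).Nonempty) :
    B.1 ∈ arcPts A ∨ A.1 ∈ arcPts B := by
  obtain ⟨a, ha⟩ := exists_coord_eq A.1
  obtain ⟨z, hzA, hzB⟩ := h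
  simp only [mem_arcPts_iff a, ha, LinBtw] at *
  grind [coord_bounds]

lemma inter_nonempty_of_union_eq_univ (h : arcPts A ∪ arcPts B = univ) :
    (arcPts A ∩ arcPts B).Nonempty := by
  by_cases hB : B.1 ∈ arcPts A
  · exact ⟨B.1, hB, left_mem_arcPts B⟩
  by_cases hA : A.1 ∈ arcPts B
  · exact ⟨A.1, left_mem_arcPts A, hA⟩
  obtain ⟨a, ha⟩ := exists_coord_eq A.1
  have hmid : (coord a A.2 + coord a B.1) / 2 ∈ Ico a (a + 1) := by
    grind [coord_bounds]
  have hx := h ▸ mem_univ (((coord a A.2 + coord a B.1) / 2 : ℝ) : Circle1)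
  simp only [mem_union, mem_arcPts_iff a, ha, coord_coe hmid, LinBtw] at *
  grind [coord_bounds]

def OverlapsAhead (A B : Circle1 × Circle1) : Prop := B.1 ∈ arcPts A ∧ B.2 ∉ arcPts A

lemma OverlapsAhead.union_eq (h : OverlapsAhead A B) :
    arcPts A ∪ arcPts B = arcPts (A.1, B.2) := by
  obtain ⟨a, ha⟩ := exists_coord_eq A.1
  obtain ⟨h₁, h₂⟩ := h
  ext x
  simp only [mem_union, mem_arcPts_iff a, ha, LinBtw] at *
  grind [coord_bounds]

lemma overlapsAhead_or_overlapsAhead (hne : (arcPts A ∩ arcPts B).Nonempty)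
    (hBA : ¬ arcPts B ⊆ arcPts A) (hAB : ¬ arcPts A ⊆ arcPts B)
    (hu : arcPts A ∪ arcPts B ≠ univ) : OverlapsAhead A B ∨ OverlapsAhead B A := by
  rcases fst_mem_or_fst_mem hne with h | h
  · exact Or.inl ⟨h, fun h' => hu (union_eq_univ_of_ends_mem h h' hBA)⟩
  · exact Or.inr ⟨h, fun h' => hu (union_comm (arcPts A) _ ▸
      union_eq_univ_of_ends_mem h h' hAB)⟩

lemma exists_arc_eq_union (hne : (arcPts A ∩ arcPts B).Nonempty)
    (hBA : ¬ arcPts B ⊆ arcPts A) (hAB : ¬ arcPts A ⊆ arcPts B)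
    (hu : arcPts A ∪ arcPts B ≠ univ) :
    ∃ D : Circle1 × Circle1, arcPts D = arcPts A ∪ arcPts B ∧ D.1 ≠ D.2 := by
  rcases overlapsAhead_or_overlapsAhead hne hBA hAB hu with h | h
  · exact ⟨_, h.union_eq.symm, fun he => h.2 (he ▸ left_mem_arcPts A)⟩
  · exact ⟨_, h.union_eq.symm.trans (union_comm _ _), fun he => h.2 (he ▸ left_mem_arcPts B)⟩

lemma exists_arc_thickening (hD : D.1 ≠ D.2) {E : Set Circle1} (hE : E.Finite) :
    ∃ c : Circle1 × Circle1, arcPts D ⊆ arcPts c ∧ c.1 ≠ c.2 ∧ c.1 ∉ E ∧ c.2 ∉ E ∧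
      ∀ e ∈ E, e ∈ arcPts c → e ∈ arcPts D := by
  obtain ⟨a, ha⟩ := exists_coord_eq D.1
  have hab : a < coord a D.2 := (coord_bounds a D.2).1.lt_of_ne fun h =>
    hD (by rw [← coe_coord a D.1, ← coe_coord a D.2, ha, ← h])
  obtain ⟨r, l, hbr, hrl, hlc, hfree⟩ :=
    exists_margins (hE.image (coord a)) (coord_bounds a D.2).2
  have hfree' : ∀ e ∈ E, coord a e ∉ Ioc (coord a D.2) r ∧ coord a e ∉ Ico l (a + 1) :=
    fun e he => hfree _ (mem_image_of_mem _ he)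
  have hr : coord a r = r := coord_coe ⟨by linarith, by linarith⟩
  have hl : coord a l = l := coord_coe ⟨by linarith, by linarith⟩
  refine ⟨(l, r), fun x hx => ?_, fun h => ?_, fun h => ?_, fun h => ?_, fun e he hec => ?_⟩
  · simp only [mem_arcPts_iff a, ha, hr, hl, LinBtw] at *
    grind [coord_bounds]
  · have := congrArg (coord a) h
    simp only [hr, hl] at this
    linarith
  · have := hfree' _ h
    simp only [hl, mem_Ioc, mem_Ico] at this
    grind [coord_bounds]
  · have := hfree' _ h
    simp only [hr, mem_Ioc, mem_Ico] at this
    grind [coord_bounds]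
  · have := hfree' e he
    simp only [mem_arcPts_iff a, ha, hr, hl, LinBtw, mem_Ioc, mem_Ico] at *
    grind [coord_bounds]

lemma arcPts_extend_fst {r : Circle1} (h : r ∉ arcPts A) :
    arcPts (r, A.2) = arcPts (r, A.1) ∪ arcPts A := by
  obtain ⟨a, ha⟩ := exists_coord_eq A.1
  ext x
  simp only [mem_union, mem_arcPts_iff a, ha, LinBtw] at *
  grind [coord_bounds]

lemma arcPts_extend_snd {r : Circle1} (h : r ∉ arcPts A) :
    arcPts (A.1, r) = arcPts A ∪ arcPts (A.2, r) := by
  obtain ⟨a, ha⟩ := exists_coord_eq A.1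
  ext x
  simp only [mem_union, mem_arcPts_iff a, ha, LinBtw] at *
  grind [coord_bounds]

lemma mem_of_gap_order {a : ℝ} {W₁ W₂ : Circle1 × Circle1} {e₁ e₂ : Circle1}
    (ha : coord a A.1 = a) (hAB : OverlapsAhead A B)
    (h₁A : ¬ (arcPts A ∩ arcPts W₁).Nonempty) (h₁B : (arcPts B ∩ arcPts W₁).Nonempty)
    (h₂B : ¬ (arcPts B ∩ arcPts W₂).Nonempty) (h₂A : (arcPts A ∩ arcPts W₂).Nonempty)
    (he₁ : e₁ = W₁.1 ∨ e₁ = W₁.2) (he₂ : e₂ = W₂.1 ∨ e₂ = W₂.2)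
    (hq₁ : coord a B.2 < coord a e₁) (hq₂ : coord a B.2 < coord a e₂)
    (h : coord a e₂ ≤ coord a e₁) : e₁ ∈ arcPts W₂ := by
  have hA₁ : A.1 ∉ arcPts W₁ := fun h => h₁A ⟨_, left_mem_arcPts A, h⟩
  have hW₁₁ : W₁.1 ∉ arcPts A := fun h => h₁A ⟨_, h, left_mem_arcPts W₁⟩
  have hW₁₂ : W₁.2 ∉ arcPts A := fun h => h₁A ⟨_, h, right_mem_arcPts W₁⟩
  have hB₁ : B.1 ∉ arcPts W₂ := fun h => h₂B ⟨_, left_mem_arcPts B, h⟩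
  have hW₂₁ : W₂.1 ∉ arcPts B := fun h => h₂B ⟨_, h, left_mem_arcPts W₂⟩
  have hW₂₂ : W₂.2 ∉ arcPts B := fun h => h₂B ⟨_, h, right_mem_arcPts W₂⟩
  obtain ⟨z₁, hz₁B, hz₁W⟩ := h₁B
  obtain ⟨z₂, hz₂A, hz₂W⟩ := h₂A
  obtain ⟨hB₁A, hB₂A⟩ := hAB
  rcases he₁ with rfl | rfl <;> rcases he₂ with rfl | rfl <;>
  · simp only [mem_arcPts_iff a, ha, LinBtw] at *
    grind [coord_bounds]

end ArcGeometry

section Models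

variable {G : SimpleGraph V} {ψ : V → Circle1 × Circle1} {v u w : V}

lemma lep_eq_or (ψ : V → Circle1 × Circle1) (p : V × Bool) :
    lep ψ p = (ψ p.1).1 ∨ lep ψ p = (ψ p.1).2 := by
  rcases p with ⟨x, _ | _⟩ <;> simp [lep]

lemma lep_mem_arcPts (ψ : V → Circle1 × Circle1) (p : V × Bool) : lep ψ p ∈ arcPts (ψ p.1) := by
  rcases lep_eq_or ψ p with h | h <;> rw [h]
  exacts [left_mem_arcPts _, right_mem_arcPts _]

lemma lep_update_of_ne [DecidableEq V] {c : Circle1 × Circle1} {p : V × Bool} (h : p.1 ≠ v) :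
    lep (Function.update ψ v c) p = lep ψ p := by
  simp [lep, Function.update_of_ne h]

lemma mem_cnbr : w ∈ cnbr G v ↔ w = v ∨ G.Adj v w := mem_insert_iff

lemma self_mem_cnbr (G : SimpleGraph V) (v : V) : v ∈ cnbr G v := mem_insert v _

lemma adj_of_mem_cnbr (h : w ∈ cnbr G v) (hw : w ≠ v) : G.Adj v w :=
  (mem_cnbr.1 h).resolve_left hw

namespace IsCAModel

variable (hm : IsCAModel G ψ)
include hm

lemma lep_injective : Function.Injective (lep ψ) :=
  fun p q h => hm.1 (mem_univ p.1) (mem_univ q.1) h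

lemma mem_cnbr_iff : w ∈ cnbr G v ↔ (arcPts (ψ v) ∩ arcPts (ψ w)).Nonempty := by
  rcases eq_or_ne w v with rfl | hwv
  · exact iff_of_true (self_mem_cnbr G w) ⟨_, left_mem_arcPts _, left_mem_arcPts _⟩
  · rw [mem_cnbr, or_iff_right hwv, hm.2 v w hwv.symm]

lemma cnbr_subset (h : arcPts (ψ v) ⊆ arcPts (ψ u)) : cnbr G v ⊆ cnbr G u :=
  fun _ hw => hm.mem_cnbr_iff.2 ((hm.mem_cnbr_iff.1 hw).mono (inter_subset_inter_left _ h))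

/-- An arc meeting the new arc `c` without having an endpoint in it contains `c`, hence meets
the old arc of `v`. -/
lemma update [DecidableEq V] {c : Circle1 × Circle1} (hgrow : arcPts (ψ v) ⊆ arcPts c)
    (hc : c.1 ≠ c.2)
    (hfresh : ∀ p : V × Bool, p.1 ≠ v → lep ψ p ≠ c.1 ∧ lep ψ p ≠ c.2)
    (hadj : ∀ p : V × Bool, p.1 ≠ v → lep ψ p ∈ arcPts c → G.Adj v p.1) :
    IsCAModel G (Function.update ψ v c) := by
  have key : ∀ w, w ≠ v → (G.Adj v w ↔ (arcPts c ∩ arcPts (ψ w)).Nonempty) := by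
    refine fun w hw => ⟨fun h => ((hm.2 v w hw.symm).1 h).mono (inter_subset_inter_left _ hgrow),
      fun ⟨z, hzc, hzw⟩ => ?_⟩
    by_cases h₁ : (ψ w).1 ∈ arcPts c
    · exact hadj (w, false) hw h₁
    by_cases h₂ : (ψ w).2 ∈ arcPts c
    · exact hadj (w, true) hw h₂
    exact (hm.2 v w hw.symm).2
      ⟨_, left_mem_arcPts _, subset_of_ends_not_mem hzw hzc h₁ h₂ (hgrow (left_mem_arcPts _))⟩
  refine ⟨?_, fun x y hxy => ?_⟩
  · rintro ⟨x, b⟩ - ⟨y, b'⟩ - h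
    by_cases hx : x = v <;> by_cases hy : y = v
    · subst hx hy
      cases b <;> cases b' <;> simp_all [lep]
    · subst hx
      have := hfresh (y, b') hy
      rw [lep_update_of_ne (p := (y, b')) hy] at h
      cases b <;> simp_all [lep]
    · subst hy
      have := hfresh (x, b) hx
      rw [lep_update_of_ne (p := (x, b)) hx] at h
      cases b' <;> simp_all [lep]
    · rw [lep_update_of_ne (p := (x, b)) hx, lep_update_of_ne (p := (y, b')) hy] at h
      exact hm.lep_injective h
  by_cases hx : x = v
  · subst hx
    rw [Function.update_self, Function.update_of_ne hxy.symm]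
    exact key y hxy.symm
  by_cases hy : y = v
  · subst hy
    rw [Function.update_self, Function.update_of_ne hx, G.adj_comm, inter_comm]
    exact key x hx
  rw [Function.update_of_ne hx, Function.update_of_ne hy]
  exact hm.2 x y hxy

lemma update_fst [DecidableEq V] {r : Circle1} (hr : r ∉ range (lep ψ)) (hrv : r ∉ arcPts (ψ v))
    (hF : ∀ p : V × Bool, p.1 ∉ cnbr G v → lep ψ p ∉ arcPts (r, (ψ v).1)) :
    IsCAModel G (Function.update ψ v (r, (ψ v).2)) := by
  have hext := arcPts_extend_fst hrv
  refine hm.update (hext ▸ subset_union_right) (fun h => hr ⟨(v, true), h.symm⟩)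
    (fun p hp => ⟨fun h => hr ⟨p, h⟩,
      fun h => hp (congrArg Prod.fst (hm.lep_injective (a₂ := (v, true)) h))⟩)
    fun p hp hpc => adj_of_mem_cnbr ?_ hp
  rcases hext ▸ hpc with h | h
  · exact not_not.1 fun h' => hF p h' h
  · exact hm.mem_cnbr_iff.2 ⟨_, h, lep_mem_arcPts ψ p⟩

lemma update_snd [DecidableEq V] {r : Circle1} (hr : r ∉ range (lep ψ)) (hrv : r ∉ arcPts (ψ v))
    (hH : ∀ p : V × Bool, p.1 ∉ cnbr G v → lep ψ p ∉ arcPts ((ψ v).2, r)) :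
    IsCAModel G (Function.update ψ v ((ψ v).1, r)) := by
  have hext := arcPts_extend_snd hrv
  refine hm.update (hext ▸ subset_union_left) (fun h => hr ⟨(v, false), h⟩)
    (fun p hp => ⟨fun h => hp (congrArg Prod.fst (hm.lep_injective (a₂ := (v, false)) h)),
      fun h => hr ⟨p, h⟩⟩)
    fun p hp hpc => adj_of_mem_cnbr ?_ hp
  rcases hext ▸ hpc with h | h
  · exact hm.mem_cnbr_iff.2 ⟨_, h, lep_mem_arcPts ψ p⟩
  · exact not_not.1 fun h' => hH p h' h

end IsCAModel

lemma range_lep_update_subset [DecidableEq V] (c : Circle1 × Circle1) :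
    range (lep (Function.update ψ v c)) ⊆ range (lep ψ) ∪ {c.1, c.2} := by
  rintro _ ⟨⟨x, b⟩, rfl⟩
  rcases eq_or_ne x v with rfl | hx
  · cases b <;> simp [lep]
  · exact Or.inl ⟨(x, b), (lep_update_of_ne (p := (x, b)) hx).symm⟩

lemma arcPts_subset_update [DecidableEq V] {c : Circle1 × Circle1} (h : arcPts (ψ v) ⊆ arcPts c)
    (w : V) :
    arcPts (ψ w) ⊆ arcPts (Function.update ψ v c w) := by
  rcases eq_or_ne w v with rfl | hw
  · rwa [Function.update_self]
  · rw [Function.update_of_ne hw]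

end Models

section Relations

variable {G : SimpleGraph V} {ψ : V → Circle1 × Circle1} {v u w : V}

lemma Cc.symm (h : Cc G v u) : Cc G u v :=
  ⟨h.1.symm, h.2.1.symm, union_comm (cnbr G v) _ ▸ h.2.2.1, h.2.2.2.2, h.2.2.2.1⟩

lemma Cc.cnbr_not_subset (hun : NoUniversal G) (hcc : Cc G v u) : ¬ cnbr G u ⊆ cnbr G v :=
  fun h => hun v (union_eq_left.2 h ▸ hcc.2.2.1)

namespace IsCAModel

variable (hm : IsCAModel G ψ)
include hm

lemma ssubset_cnbr_of_union_eq_univ (htw : NoTwins G)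
    (h : arcPts (ψ v) ∪ arcPts (ψ u) = univ) (hw : w ∈ cnbr G v \ cnbr G u) :
    cnbr G w ⊂ cnbr G v := by
  have hsub : arcPts (ψ w) ⊆ arcPts (ψ v) := fun z hz =>
    (h ▸ mem_univ z : z ∈ arcPts (ψ v) ∪ arcPts (ψ u)).resolve_right
      fun hzu => hw.2 (hm.mem_cnbr_iff.2 ⟨z, hzu, hz⟩)
  refine (hm.cnbr_subset hsub).ssubset_of_ne (htw w v fun hwv => hw.2 ?_)
  rw [hwv, hm.mem_cnbr_iff, inter_comm]
  exact inter_nonempty_of_union_eq_univ h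

lemma cc_of_union_eq_univ (htw : NoTwins G) (hvu : v ≠ u)
    (h : arcPts (ψ v) ∪ arcPts (ψ u) = univ) : Cc G v u := by
  refine ⟨hvu, (hm.2 v u hvu).2 (inter_nonempty_of_union_eq_univ h),
    eq_univ_of_forall fun w => ?_,
    fun w => hm.ssubset_cnbr_of_union_eq_univ htw h,
    fun w => hm.ssubset_cnbr_of_union_eq_univ htw (union_comm (arcPts (ψ v)) _ ▸ h)⟩
  have hz := h ▸ mem_univ (ψ w).1
  rw [mem_union, hm.mem_cnbr_iff, hm.mem_cnbr_iff]
  exact hz.imp (fun hz => ⟨_, hz, left_mem_arcPts _⟩) (fun hz => ⟨_, hz, left_mem_arcPts _⟩)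

end IsCAModel

end Relations

section Repairs

variable {G : SimpleGraph V} {ψ : V → Circle1 × Circle1} {v u : V}

namespace IsCAModel

variable (hm : IsCAModel G ψ)
include hm

/-- The arc of `v` is stretched over the union of the two arcs: every endpoint it swallows
belongs to a neighbour of `u` or of `v`, hence of `v` as `N[u] ⊆ N[v]`. -/
lemma exists_update_superset [Finite V] [DecidableEq V] (htw : NoTwins G) (hun : NoUniversal G)
    (hcs : Cs G v u) (hnot : ¬ arcPts (ψ u) ⊆ arcPts (ψ v)) :
    ∃ c, IsCAModel G (Function.update ψ v c) ∧ arcPts (ψ v) ⊆ arcPts c ∧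
      arcPts (ψ u) ⊆ arcPts c := by
  have hvu : ¬ arcPts (ψ v) ⊆ arcPts (ψ u) := fun h => hcs.2.not_subset (hm.cnbr_subset h)
  have hcov : arcPts (ψ v) ∪ arcPts (ψ u) ≠ univ :=
    fun h => (hm.cc_of_union_eq_univ htw hcs.1 h).cnbr_not_subset hun hcs.2.subset
  have hne := hm.mem_cnbr_iff.1 (hcs.2.subset (self_mem_cnbr G u))
  obtain ⟨D, hD, hD₁₂⟩ := exists_arc_eq_union hne hnot hvu hcov
  obtain ⟨c, hDc, hc, hc₁, hc₂, hcD⟩ := exists_arc_thickening hD₁₂ (finite_range (lep ψ))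
  rw [hD] at hDc hcD
  refine ⟨c, hm.update (subset_union_left.trans hDc) hc
    (fun p _ => ⟨fun h => hc₁ (h ▸ mem_range_self p), fun h => hc₂ (h ▸ mem_range_self p)⟩)
    (fun p hp hpc => adj_of_mem_cnbr ?_ hp), subset_union_left.trans hDc,
    subset_union_right.trans hDc⟩
  rcases hcD _ (mem_range_self p) hpc with h | h
  · exact hm.mem_cnbr_iff.2 ⟨_, h, lep_mem_arcPts ψ p⟩
  · exact hcs.2.subset (hm.mem_cnbr_iff.2 ⟨_, h, lep_mem_arcPts ψ p⟩)

/-- In the gap `(ψ u).2 < x < a + 1` left by the two arcs, the endpoints of non-neighbours of `v`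
come before those of non-neighbours of `u`: otherwise such two non-neighbours `w₁, w₂` would be
adjacent, whereas `Cc` forces `N[w₁] ⊊ N[u] ∌ w₂`. -/
lemma coord_lt_of_cc {a : ℝ} (hcc : Cc G v u)
    (hvu : OverlapsAhead (ψ v) (ψ u)) (ha : coord a (ψ v).1 = a) {p₁ p₂ : V × Bool}
    (h₁ : p₁.1 ∉ cnbr G v) (h₂ : p₂.1 ∉ cnbr G u)
    (hq₁ : coord a (ψ u).2 < coord a (lep ψ p₁)) (hq₂ : coord a (ψ u).2 < coord a (lep ψ p₂)) :
    coord a (lep ψ p₁) < coord a (lep ψ p₂) := by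
  have hw₁ : p₁.1 ∈ cnbr G u := (hcc.2.2.1 ▸ mem_univ p₁.1).resolve_left h₁
  have hw₂ : p₂.1 ∈ cnbr G v := (hcc.2.2.1 ▸ mem_univ p₂.1).resolve_right h₂
  refine lt_of_not_ge fun hle => h₂ ((hcc.2.2.2.2 p₁.1 ⟨hw₁, h₁⟩).subset ?_)
  refine hm.mem_cnbr_iff.2 ⟨_, lep_mem_arcPts ψ p₁, mem_of_gap_order ha hvu
    (mt hm.mem_cnbr_iff.2 h₁) (hm.mem_cnbr_iff.1 hw₁) (mt hm.mem_cnbr_iff.2 h₂)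
    (hm.mem_cnbr_iff.1 hw₂) (lep_eq_or ψ p₁) (lep_eq_or ψ p₂) hq₁ hq₂ hle⟩

lemma exists_cut_points [Finite V] {a : ℝ} (hcc : Cc G v u)
    (hvu : OverlapsAhead (ψ v) (ψ u)) (ha : coord a (ψ v).1 = a) :
    ∃ r₁ r₂ : ℝ, coord a (ψ u).2 < r₁ ∧ r₁ < r₂ ∧ r₂ < a + 1 ∧
      (∀ p, coord a (lep ψ p) ≠ r₁) ∧ (∀ p, coord a (lep ψ p) ≠ r₂) ∧
      (∀ p : V × Bool, p.1 ∉ cnbr G v → coord a (ψ u).2 < coord a (lep ψ p) →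
        coord a (lep ψ p) < r₁) ∧
      (∀ p : V × Bool, p.1 ∉ cnbr G u → coord a (ψ u).2 < coord a (lep ψ p) →
        r₂ < coord a (lep ψ p)) := by
  set q := coord a (ψ u).2
  set E := range fun p => coord a (lep ψ p)
  set F := {x | ∃ p : V × Bool, p.1 ∉ cnbr G v ∧ coord a (lep ψ p) = x ∧ q < x}
  set H := {x | ∃ p : V × Bool, p.1 ∉ cnbr G u ∧ coord a (lep ψ p) = x ∧ q < x}
  have hE : E.Finite := finite_range _
  have hF : F.Finite := hE.subset fun x ⟨p, _, hp, _⟩ => ⟨p, hp⟩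
  have hH : H.Finite := hE.subset fun x ⟨p, _, hp, _⟩ => ⟨p, hp⟩
  have hq : q < a + 1 := (coord_bounds a _).2
  obtain ⟨r₁, hr₁E, hr₁F, hr₁H⟩ := exists_fresh_between (hF.insert q) (hH.insert (a + 1)) hE
    (insert_nonempty _ _) (insert_nonempty _ _) (by
      rintro _ (rfl | ⟨p₁, h₁, rfl, hq₁⟩) _ (rfl | ⟨p₂, h₂, rfl, hq₂⟩)
      exacts [hq, hq₂, (coord_bounds a _).2, hm.coord_lt_of_cc hcc hvu ha h₁ h₂ hq₁ hq₂])
  obtain ⟨r₂, hr₂E, hr₁₂, hr₂H⟩ := exists_fresh_between (finite_singleton r₁)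
    (hH.insert (a + 1)) hE (singleton_nonempty r₁) (insert_nonempty _ _)
    (fun _ hl u hu => (mem_singleton_iff.1 hl) ▸ hr₁H u hu)
  exact ⟨r₁, r₂, hr₁F q (mem_insert q F), hr₁₂ r₁ rfl, hr₂H _ (mem_insert _ H),
    fun p h => hr₁E ⟨p, h⟩, fun p h => hr₂E ⟨p, h⟩,
    fun p hp hpq => hr₁F _ (mem_insert_of_mem _ ⟨p, hp, rfl, hpq⟩),
    fun p hp hpq => hr₂H _ (mem_insert_of_mem _ ⟨p, hp, rfl, hpq⟩)⟩

lemma exists_cover_of_overlapsAhead [Finite V] [DecidableEq V] (hcc : Cc G v u)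
    (hvu : OverlapsAhead (ψ v) (ψ u)) :
    ∃ ψ' : V → Circle1 × Circle1, IsCAModel G ψ' ∧ (∀ w, arcPts (ψ w) ⊆ arcPts (ψ' w)) ∧
      arcPts (ψ' v) ∪ arcPts (ψ' u) = univ := by
  obtain ⟨a, ha⟩ := exists_coord_eq (ψ v).1
  obtain ⟨r₁, r₂, hqr₁, hr₁₂, hr₂, hr₁E, hr₂E, hF, hH⟩ := hm.exists_cut_points hcc hvu ha
  have hc₁ : coord a r₁ = r₁ := coord_coe ⟨by linarith [coord_bounds a (ψ u).2], by linarith⟩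
  have hc₂ : coord a r₂ = r₂ := coord_coe ⟨by linarith [coord_bounds a (ψ u).2], hr₂⟩
  have huv : u ≠ v := hcc.1.symm
  obtain ⟨hB₁, hB₂⟩ := hvu
  simp only [mem_arcPts_iff a, ha, LinBtw] at hB₁ hB₂
  have hr₁v : (r₁ : Circle1) ∉ arcPts (ψ v) := by
    rw [mem_arcPts_iff a, ha, hc₁, LinBtw]
    grind [coord_bounds]
  have hr₂u : (r₂ : Circle1) ∉ arcPts (ψ u) := by
    rw [mem_arcPts_iff a, hc₂, LinBtw]
    grind [coord_bounds]
  set ψ₁ := Function.update ψ v (r₁, (ψ v).2)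
  have hψ₁u : ψ₁ u = ψ u := Function.update_of_ne huv _ _
  have hψ₁v : ψ₁ v = ((r₁ : Circle1), (ψ v).2) := Function.update_self _ _ _
  have hm₁ : IsCAModel G ψ₁ := by
    refine hm.update_fst (fun ⟨p, h⟩ => hr₁E p (by rw [h, hc₁])) hr₁v fun p hp h => ?_
    have hpv : lep ψ p ∉ arcPts (ψ v) :=
      fun h' => hp (hm.mem_cnbr_iff.2 ⟨_, h', lep_mem_arcPts ψ p⟩)
    have := hF p hp
    simp only [mem_arcPts_iff a, ha, hc₁, LinBtw] at *
    grind [coord_bounds]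
  have hm₂ : IsCAModel G (Function.update ψ₁ u ((ψ₁ u).1, r₂)) := by
    refine hm₁.update_snd (fun h => ?_) (hψ₁u ▸ hr₂u) fun p hp h => ?_
    · rcases range_lep_update_subset _ h with ⟨p, h⟩ | h | h
      · exact hr₂E p (by rw [h, hc₂])
      · exact hr₁₂.ne' (by simpa [hc₁, hc₂] using congrArg (coord a) h)
      · exact hr₂E (v, true) ((congrArg (coord a) (mem_singleton_iff.1 h)).symm.trans hc₂)
    have hpv : p.1 ≠ v := fun h => hp (h ▸ mem_cnbr.2 (Or.inr hcc.2.1.symm))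
    rw [lep_update_of_ne hpv, hψ₁u] at h
    have hpu : lep ψ p ∉ arcPts (ψ u) :=
      fun h' => hp (hm.mem_cnbr_iff.2 ⟨_, h', lep_mem_arcPts ψ p⟩)
    have := hH p hp
    simp only [mem_arcPts_iff a, hc₂, LinBtw] at *
    grind [coord_bounds]
  refine ⟨_, hm₂, fun w => (arcPts_subset_update ?_ w).trans (arcPts_subset_update ?_ w), ?_⟩
  · exact arcPts_extend_fst hr₁v ▸ subset_union_right
  · exact arcPts_extend_snd (hψ₁u ▸ hr₂u) ▸ subset_union_left
  · rw [Function.update_self, Function.update_of_ne huv.symm, hψ₁v, hψ₁u]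
    refine eq_univ_of_forall fun x => ?_
    simp only [mem_union, mem_arcPts_iff a, hc₁, hc₂, LinBtw] at *
    grind [coord_bounds]

lemma exists_cover [Finite V] [DecidableEq V] (hun : NoUniversal G) {v u : V} (hcc : Cc G v u)
    (hnot : arcPts (ψ v) ∪ arcPts (ψ u) ≠ univ) :
    ∃ ψ' : V → Circle1 × Circle1, IsCAModel G ψ' ∧ (∀ w, arcPts (ψ w) ⊆ arcPts (ψ' w)) ∧
      arcPts (ψ' v) ∪ arcPts (ψ' u) = univ := by
  have huv : ¬ arcPts (ψ u) ⊆ arcPts (ψ v) := fun h => hcc.cnbr_not_subset hun (hm.cnbr_subset h)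
  have hvu : ¬ arcPts (ψ v) ⊆ arcPts (ψ u) :=
    fun h => hcc.symm.cnbr_not_subset hun (hm.cnbr_subset h)
  rcases overlapsAhead_or_overlapsAhead ((hm.2 v u hcc.1).1 hcc.2.1) huv hvu hnot with h | h
  · exact hm.exists_cover_of_overlapsAhead hcc h
  · obtain ⟨ψ', hm', hgrow, hcov⟩ := hm.exists_cover_of_overlapsAhead hcc.symm h
    exact ⟨ψ', hm', hgrow, union_comm (arcPts (ψ' v)) _ ▸ hcov⟩

end IsCAModel

end Repairs

section Normalization

variable {G : SimpleGraph V} {ψ : V → Circle1 × Circle1}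

namespace IsCAModel

variable (hm : IsCAModel G ψ)
include hm

lemma exists_cover_all [Finite V] (hun : NoUniversal G) :
    ∃ ψ' : V → Circle1 × Circle1, IsCAModel G ψ' ∧
      ∀ v u, Cc G v u → arcPts (ψ' v) ∪ arcPts (ψ' u) = univ := by
  classical
  have := Fintype.ofFinite V
  suffices ∀ s : Finset (V × V), ∃ ψ' : V → Circle1 × Circle1, IsCAModel G ψ' ∧
      ∀ p ∈ s, Cc G p.1 p.2 → arcPts (ψ' p.1) ∪ arcPts (ψ' p.2) = univ by
    obtain ⟨ψ', hm', h⟩ := this Finset.univ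
    exact ⟨ψ', hm', fun v u => h (v, u) (Finset.mem_univ _)⟩
  intro s
  induction s using Finset.induction_on with
  | empty => exact ⟨ψ, hm, by simp⟩
  | insert p s _ ih =>
    obtain ⟨ψ₁, hm₁, h₁⟩ := ih
    by_cases hp : Cc G p.1 p.2 ∧ arcPts (ψ₁ p.1) ∪ arcPts (ψ₁ p.2) ≠ univ
    · obtain ⟨ψ₂, hm₂, hgrow, hcov⟩ := hm₁.exists_cover hun hp.1 hp.2
      refine ⟨ψ₂, hm₂, (Finset.forall_mem_insert _ _ _).2 ⟨fun _ => hcov, fun q hq hcc => ?_⟩⟩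
      exact univ_subset_iff.1 (h₁ q hq hcc ▸ union_subset_union (hgrow _) (hgrow _))
    · exact ⟨ψ₁, hm₁, (Finset.forall_mem_insert _ _ _).2
        ⟨fun hcc => not_not.1 fun h => hp ⟨hcc, h⟩, h₁⟩⟩

/-- Containments are repaired in increasing order of `|N[v]|`: stretching the arc of `v` can
only break a containment `Cs x v`, and those have `|N[x]| > |N[v]|`. -/
lemma exists_contain_all [Finite V] (htw : NoTwins G) (hun : NoUniversal G)
    (hcc : ∀ v u, Cc G v u → arcPts (ψ v) ∪ arcPts (ψ u) = univ) :
    ∃ ψ' : V → Circle1 × Circle1, IsCAModel G ψ' ∧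
      (∀ v u, Cc G v u → arcPts (ψ' v) ∪ arcPts (ψ' u) = univ) ∧
      ∀ v u, Cs G v u → arcPts (ψ' u) ⊆ arcPts (ψ' v) := by
  classical
  have := Fintype.ofFinite V
  suffices ∀ s : Finset (V × V), ∃ ψ' : V → Circle1 × Circle1, IsCAModel G ψ' ∧
      (∀ v u, Cc G v u → arcPts (ψ' v) ∪ arcPts (ψ' u) = univ) ∧
      ∀ p ∈ s, Cs G p.1 p.2 → arcPts (ψ' p.2) ⊆ arcPts (ψ' p.1) by
    obtain ⟨ψ', hm', hcc', h⟩ := this Finset.univ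
    exact ⟨ψ', hm', hcc', fun v u => h (v, u) (Finset.mem_univ _)⟩
  intro s
  induction s using Finset.induction_on_max_value (fun p : V × V => (cnbr G p.1).ncard) with
  | empty => exact ⟨ψ, hm, hcc, by simp⟩
  | insert p s _ hmax ih =>
    obtain ⟨ψ₁, hm₁, hcc₁, hcs₁⟩ := ih
    by_cases hp : Cs G p.1 p.2 ∧ ¬ arcPts (ψ₁ p.2) ⊆ arcPts (ψ₁ p.1)
    · obtain ⟨c, hm₂, hgrow, hsub⟩ := hm₁.exists_update_superset htw hun hp.1 hp.2
      have hgrow' := arcPts_subset_update hgrow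
      refine ⟨_, hm₂, fun v u hvu => univ_subset_iff.1
        (hcc₁ v u hvu ▸ union_subset_union (hgrow' v) (hgrow' u)),
        (Finset.forall_mem_insert _ _ _).2
          ⟨fun hcs => by rwa [Function.update_self, Function.update_of_ne hcs.1.symm],
            fun q hq hcs => ?_⟩⟩
      have hq₂ : q.2 ≠ p.1 := fun h =>
        (hmax q hq).not_gt (h ▸ Set.ncard_lt_ncard hcs.2 (toFinite _))
      rw [Function.update_of_ne hq₂]
      exact (hcs₁ q hq hcs).trans (hgrow' q.1)
    · exact ⟨ψ₁, hm₁, hcc₁, (Finset.forall_mem_insert _ _ _).2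
        ⟨fun hcs => not_not.1 fun h => hp ⟨hcs, h⟩, hcs₁⟩⟩

lemma isNormalizedModel (htw : NoTwins G)
    (hcs : ∀ v u, Cs G v u → arcPts (ψ u) ⊆ arcPts (ψ v))
    (hcc : ∀ v u, Cc G v u → arcPts (ψ v) ∪ arcPts (ψ u) = univ) :
    IsNormalizedModel G ψ := by
  have hinj : ∀ x y, x ≠ y → arcPts (ψ x) ≠ arcPts (ψ y) := fun x y hxy h =>
    htw x y hxy ((hm.cnbr_subset h.le).antisymm (hm.cnbr_subset h.ge))
  have hss : ∀ x y, x ≠ y → (arcPts (ψ x) ⊂ arcPts (ψ y) ↔ arcPts (ψ x) ⊆ arcPts (ψ y)) :=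
    fun x y hxy => ⟨subset_of_ssubset, fun h => h.ssubset_of_ne (hinj x y hxy)⟩
  have hcs_iff : ∀ v u, v ≠ u → (Cs G v u ↔ arcPts (ψ u) ⊆ arcPts (ψ v)) := fun v u hvu =>
    ⟨hcs v u, fun h => ⟨hvu, (hm.cnbr_subset h).ssubset_of_ne (htw u v hvu.symm)⟩⟩
  refine ⟨hm, fun u v huv => ?_⟩
  have hdi : Di G v u ↔ arcPts (ψ v) ∩ arcPts (ψ u) = ∅ := by
    rw [Di, hm.2 v u huv.symm, not_nonempty_iff_eq_empty, and_iff_right huv.symm]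
  have hcd : Cd G v u ↔ arcPts (ψ v) ⊆ arcPts (ψ u) := by
    rw [← hcs_iff u v huv]
    exact ⟨fun h => ⟨huv, h.2⟩, fun h => ⟨huv.symm, h.2⟩⟩
  have hcc' : Cc G v u ↔ arcPts (ψ v) ∪ arcPts (ψ u) = univ :=
    ⟨hcc v u, hm.cc_of_union_eq_univ htw huv.symm⟩
  simp only [Ov, ArcsOverlap, hdi, hcs_iff v u huv.symm, hcd, hcc', hss v u huv.symm,
    hss u v huv, nonempty_iff_ne_empty, ne_eq]
  tauto

end IsCAModel

end Normalization

/-- A finite graph `G` with no twins and no universal vertices is a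
circular-arc graph if and only if it admits a normalized circular-arc model. -/
theorem stmt0 {V : Type*} [Fintype V] (G : SimpleGraph V)
    (htw : NoTwins G) (hun : NoUniversal G) :
    IsCircularArc G ↔ ∃ ψ : V → Circle1 × Circle1, IsNormalizedModel G ψ := by
  refine ⟨fun ⟨ψ₀, hm₀⟩ => ?_, fun ⟨ψ, hψ⟩ => ⟨ψ, hψ.1⟩⟩
  obtain ⟨ψ₁, hm₁, hcc₁⟩ := hm₀.exists_cover_all hun
  obtain ⟨ψ, hm, hcc, hcs⟩ := hm₁.exists_contain_all htw hun hcc₁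
  exact ⟨ψ, hm.isNormalizedModel htw hcs hcc⟩

end CAIso
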